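/- Let M be a matroid on finite ground set E and let S be a random subset sampling each element independently with probability δ. Define P = { e ∈ S : e ∉ span(S − e) }. If E[|span(S)|] ≤ ε|E|, then E[|S \ P|] ≤ δ ε |E| = ε E[|S|]. -/

import Mathlib

/-!
Membership `e ∈ S` is independent of `S − e`, so
`P[e ∈ S ∧ e ∈ span(S − e)] = δ · P[e ∈ span(S − e)]`. Moreover `e ∈ span(S − e)` implies
`e ∈ span S`: if `e ∈ S` then `e ∈ span S` outright, and otherwise `S − e = S`. Summing over `e`
gives `E|S \ P| ≤ δ · E|span S| ≤ δε|E|`, while `E|S| = δ|E|`.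
-/

open scoped Classical
open Finset

/-- A matroid on a finite ground set `E`: a nonempty downward-closed family of
independent sets satisfying the exchange (augmentation) property. -/
structure FinMatroid (E : Type*) [DecidableEq E] [Fintype E] where
  Indep : Finset E → Prop
  empty_indep : Indep ∅
  subset_indep : ∀ ⦃S T : Finset E⦄, S ⊆ T → Indep T → Indep S
  exchange : ∀ ⦃S T : Finset E⦄, Indep S → Indep T → S.card < T.card →
      ∃ e ∈ T \ S, Indep (insert e S)

variable {E : Type*} [DecidableEq E] [Fintype E]

/-- The rank of a set `S`: the (common, maximal) cardinality of maximal
independent subsets of `S`. -/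
noncomputable def FinMatroid.rank (M : FinMatroid E) (S : Finset E) : ℕ :=
  (S.powerset.filter (fun I => M.Indep I)).sup Finset.card

/-- The span of a set `S`: the elements that do not increase the rank of `S`. -/
noncomputable def FinMatroid.span (M : FinMatroid E) (S : Finset E) : Finset E :=
  Finset.univ.filter (fun e => M.rank (insert e S) = M.rank S)

/-- The probability that an independent `δ`-sample of the ground set equals `s`. -/
noncomputable def sampleWeight (δ : ℝ) (s : Finset E) : ℝ :=
  δ ^ s.card * (1 - δ) ^ (Fintype.card E - s.card)

namespace FinMatroid

theorem mem_span_of_mem_span_erase (M : FinMatroid E) {e : E} {s : Finset E}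
    (h : e ∈ M.span (s.erase e)) : e ∈ M.span s := by
  by_cases he : e ∈ s
  · simp [span, insert_eq_of_mem he]
  · rwa [erase_eq_of_notMem he] at h

end FinMatroid

section sampleWeight

variable {δ : ℝ}

theorem sampleWeight_nonneg {ι : Type*} [Fintype ι] (hδ0 : 0 ≤ δ) (hδ1 : δ ≤ 1)
    (s : Finset ι) : 0 ≤ sampleWeight δ s :=
  mul_nonneg (pow_nonneg hδ0 _) (pow_nonneg (sub_nonneg.mpr hδ1) _)

theorem sum_sampleWeight {ι : Type*} [Fintype ι] (δ : ℝ) :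
    ∑ s : Finset ι, sampleWeight δ s = 1 := by
  simp only [sampleWeight]
  rw [Fintype.sum_pow_mul_eq_add_pow]
  simp

theorem one_sub_mul_sampleWeight_insert {e : E} {t : Finset E} (he : e ∉ t) :
    (1 - δ) * sampleWeight δ (insert e t) = δ * sampleWeight δ t := by
  have hlt : #t < Fintype.card E := card_lt_univ_of_notMem he
  have hexp : Fintype.card E - #t = Fintype.card E - (#t + 1) + 1 := by omega
  rw [sampleWeight, sampleWeight, card_insert_of_notMem he, hexp]
  ring

theorem sum_sampleWeight_mul_ite_mem (e : E) (g : Finset E → ℝ) :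
    ∑ s : Finset E, sampleWeight δ s * (if e ∈ s then g (s.erase e) else 0) =
      δ * ∑ s : Finset E, sampleWeight δ s * g (s.erase e) := by
  have hsplit : ∀ F : Finset E → ℝ, ∑ s : Finset E, F s =
      ∑ t ∈ (univ.erase e).powerset, (F t + F (insert e t)) := by
    intro F
    rw [sum_add_distrib, ← sum_powerset_insert (notMem_erase e _), insert_erase (mem_univ e),
      powerset_univ]
  rw [hsplit, hsplit, mul_sum]
  refine sum_congr rfl fun t ht => ?_
  have he : e ∉ t := fun h => notMem_erase e _ (mem_powerset.mp ht h)
  rw [if_neg he, if_pos (mem_insert_self e t), erase_insert he, erase_eq_of_notMem he]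
  linear_combination g t * one_sub_mul_sampleWeight_insert (δ := δ) he

theorem sum_sampleWeight_mul_card (δ : ℝ) :
    ∑ s : Finset E, sampleWeight δ s * (#s : ℝ) = δ * Fintype.card E := by
  have hmem : ∀ e : E, ∑ s : Finset E, sampleWeight δ s * (if e ∈ s then 1 else 0) = δ := by
    intro e
    simpa [sum_sampleWeight] using sum_sampleWeight_mul_ite_mem (δ := δ) e (fun _ => 1)
  calc ∑ s : Finset E, sampleWeight δ s * (#s : ℝ)
      = ∑ e : E, ∑ s : Finset E, sampleWeight δ s * (if e ∈ s then 1 else 0) := by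
        rw [sum_comm]
        refine sum_congr rfl fun s _ => ?_
        rw [← mul_sum, sum_boole, filter_mem_eq_inter, univ_inter]
    _ = δ * Fintype.card E := by
        rw [sum_congr rfl fun e _ => hmem e, sum_const, card_univ, nsmul_eq_mul, mul_comm]

end sampleWeight

theorem FinMatroid.sum_sampleWeight_mul_card_filter_mem_span_erase_le (M : FinMatroid E)
    {δ : ℝ} (hδ0 : 0 ≤ δ) (hδ1 : δ ≤ 1) :
    ∑ s : Finset E, sampleWeight δ s * (#(s.filter fun e => e ∈ M.span (s.erase e)) : ℝ) ≤
      δ * ∑ s : Finset E, sampleWeight δ s * (#(M.span s) : ℝ) := by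
  calc ∑ s : Finset E, sampleWeight δ s * (#(s.filter fun e => e ∈ M.span (s.erase e)) : ℝ)
      = ∑ e : E, ∑ s : Finset E, sampleWeight δ s *
          (if e ∈ s then (if e ∈ M.span (s.erase e) then 1 else 0) else 0) := by
        rw [sum_comm]
        refine sum_congr rfl fun s _ => ?_
        rw [← mul_sum, ← sum_filter, filter_mem_eq_inter, univ_inter, sum_boole]
    _ = ∑ e : E, δ * ∑ s : Finset E, sampleWeight δ s *
          (if e ∈ M.span (s.erase e) then 1 else 0) :=
        sum_congr rfl fun e _ =>
          sum_sampleWeight_mul_ite_mem e fun t => if e ∈ M.span t then 1 else 0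
    _ ≤ ∑ e : E, δ * ∑ s : Finset E, sampleWeight δ s * (if e ∈ M.span s then 1 else 0) := by
        gcongr with e _ s _
        · exact sampleWeight_nonneg hδ0 hδ1 s
        split_ifs with h h'
        · exact le_rfl
        · exact absurd (M.mem_span_of_mem_span_erase h) h'
        · exact zero_le_one
        · exact le_rfl
    _ = δ * ∑ s : Finset E, sampleWeight δ s * (#(M.span s) : ℝ) := by
        rw [← mul_sum, sum_comm]
        refine congrArg _ (sum_congr rfl fun s _ => ?_)
        rw [← mul_sum, sum_boole, filter_mem_eq_inter, univ_inter]

theorem greedy_sample_prune_general (M : FinMatroid E) (ε δ : ℝ)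
    (hδ0 : 0 ≤ δ) (hδ1 : δ ≤ 1)
    (hyp : ∑ s : Finset E, sampleWeight δ s * ((M.span s).card : ℝ) ≤
      ε * (Fintype.card E : ℝ)) :
    (∑ s : Finset E, sampleWeight δ s *
        (((s \ s.filter (fun e : E => e ∉ M.span (s.erase e))).card : ℝ)) ≤
      δ * ε * (Fintype.card E : ℝ)) ∧
    δ * ε * (Fintype.card E : ℝ) = ε * ∑ s : Finset E, sampleWeight δ s * (s.card : ℝ) := by
  have hunpruned (s : Finset E) : s \ s.filter (fun e => e ∉ M.span (s.erase e)) =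
      s.filter fun e => e ∈ M.span (s.erase e) := by
    rw [← filter_not]
    simp only [not_not]
  refine ⟨?_, by rw [sum_sampleWeight_mul_card]; ring⟩
  simp_rw [hunpruned]
  calc _ ≤ δ * ∑ s : Finset E, sampleWeight δ s * (#(M.span s) : ℝ) :=
        M.sum_sampleWeight_mul_card_filter_mem_span_erase_le hδ0 hδ1
    _ ≤ δ * (ε * Fintype.card E) := mul_le_mul_of_nonneg_left hyp hδ0
    _ = δ * ε * Fintype.card E := by ring

/-- claim (b) in the analysis of greedy sampling: with `S` an
independent `δ`-sample and `P = {e ∈ S : e ∉ span(S − e)}`, if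
`E[|span(S)|] ≤ ε|E|` then `E[|S \ P|] ≤ δε|E| = ε E[|S|]`. -/
theorem greedy_sample_prune (M : FinMatroid E) (ε δ : ℝ)
    (hε : 0 ≤ ε) (hδ0 : 0 ≤ δ) (hδ1 : δ ≤ 1)
    (hyp : ∑ s : Finset E, sampleWeight δ s * ((M.span s).card : ℝ) ≤
      ε * (Fintype.card E : ℝ)) :
    (∑ s : Finset E, sampleWeight δ s *
        (((s \ s.filter (fun e : E => e ∉ M.span (s.erase e))).card : ℝ)) ≤
      δ * ε * (Fintype.card E : ℝ)) ∧
    δ * ε * (Fintype.card E : ℝ) = ε * ∑ s : Finset E, sampleWeight δ s * (s.card : ℝ) :=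
  greedy_sample_prune_general M ε δ hδ0 hδ1 hyp
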